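/- Let H be a Hopf algebra over a commutative ring k with coproduct Δ, counit ε and antipode S. Let W be a right-right Hopf module over H: a k-module with a right H-module structure and a coassociative counital right coaction ρ : W → W ⊗_k H, ρ(w) = Σ w₀ ⊗ w₁, satisfying ρ(w·h) = Σ w₀·h₍₁₎ ⊗ w₁ h₍₂₎. Let W^coH := { w ∈ W | ρ(w) = w ⊗ 1_H } be the k-module of coinvariants. Then: (a) for every w ∈ W the element Σ w₀·S(w₁) lies in W^coH; and (b) the k-linear maps α : W^coH ⊗_k H → W, v ⊗ h ↦ v·h, and β : W → W^coH ⊗_k H, w ↦ Σ (w₀·S(w₁)) ⊗ w₂ (where Σ w₀ ⊗ w₁ ⊗ w₂ = (ρ⊗id)(ρ(w))), are mutually inverse k-module isomorphisms. -/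
import Mathlib

/-!
Statement 15: Fundamental theorem of Hopf modules.  For a Hopf algebra `H` over
`k` and a right-right Hopf module `W`: (a) for every `w` the element
`Σ w₀ · S(w₁)` is coinvariant, and (b) `α : W^coH ⊗ H → W`, `v ⊗ h ↦ v · h` and
`β : W → W^coH ⊗ H`, `w ↦ Σ (w₀ · S(w₁)) ⊗ w₂` are mutually inverse `k`-module
isomorphisms.  (Paper: Theorem 4.7 with `L = R = k`.)
-/

open TensorProduct

section

variable (k H W : Type*) [CommRing k] [Ring H] [HopfAlgebra k H]
  [AddCommGroup W] [Module k W]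
  (act : W →ₗ[k] H →ₗ[k] W) (ρ : W →ₗ[k] W ⊗[k] H)

/-- The submodule of coinvariants `W^coH = { w | ρ w = w ⊗ 1 }`. -/
noncomputable def coinvariants : Submodule k W :=
  LinearMap.ker (ρ - (TensorProduct.mk k W H).flip 1)

/-- The map `W ⊗ H → W`, `w ⊗ h ↦ w · S h`. -/
noncomputable def actAntipode : W ⊗[k] H →ₗ[k] W :=
  (TensorProduct.lift act) ∘ₗ
    (TensorProduct.map LinearMap.id (HopfAlgebra.antipode (R := k)))

/-- The map `Γ : W → W ⊗ H`, `w ↦ Σ (w₀ · S(w₁)) ⊗ w₂`. -/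
noncomputable def GammaMap : W →ₗ[k] W ⊗[k] H :=
  (TensorProduct.map (actAntipode k H W act) LinearMap.id) ∘ₗ
    (TensorProduct.map ρ LinearMap.id) ∘ₗ ρ

/-- The map `α : W^coH ⊗ H → W`, `v ⊗ h ↦ v · h`. -/
noncomputable def alphaMap : (↥(coinvariants k H W ρ)) ⊗[k] H →ₗ[k] W :=
  TensorProduct.lift (act ∘ₗ (coinvariants k H W ρ).subtype)

end

set_option synthInstance.maxHeartbeats 1000000
set_option maxHeartbeats 1000000

namespace FTHM15

variable {k H B : Type*} [CommRing k] [Ring H] [HopfAlgebra k H]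
  [Ring B] [Algebra k B]

local notation "Δ" => Coalgebra.comul (R := k)
local notation "S" => HopfAlgebra.antipode (R := k)

/-- Convolution product of two linear maps `H → B`. -/
noncomputable def conv (f g : H →ₗ[k] B) : H →ₗ[k] B :=
  LinearMap.mul' k B ∘ₗ TensorProduct.map f g ∘ₗ Coalgebra.comul

lemma conv_apply (f g : H →ₗ[k] B) (a : H) :
    conv f g a = LinearMap.mul' k B (TensorProduct.map f g (Δ a)) := rfl

/-- The convolution unit. -/
noncomputable def convUnit : H →ₗ[k] B :=
  Algebra.linearMap k B ∘ₗ Coalgebra.counit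

lemma conv_unit_right (f : H →ₗ[k] B) : conv f (convUnit (k := k)) = f := by
  apply LinearMap.ext; intro a
  obtain r := Coalgebra.Repr.arbitrary k a
  have hsum : ∑ i ∈ r.index, (Coalgebra.counit (R := k) (r.right i)) • (r.left i) = a := by
    have h2 := Coalgebra.sum_tmul_counit_eq (R := k) r
    have h3 := congrArg (TensorProduct.rid k H) h2
    rw [map_sum] at h3
    simp only [TensorProduct.rid_tmul, one_smul] at h3
    exact h3
  calc conv f (convUnit (k := k)) a
      = LinearMap.mul' k B (TensorProduct.map f (convUnit (k := k))
          (∑ i ∈ r.index, r.left i ⊗ₜ[k] r.right i)) := by rw [conv_apply, r.eq]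
    _ = ∑ i ∈ r.index, f (r.left i) * algebraMap k B (Coalgebra.counit (R := k) (r.right i)) := by
        simp [map_sum, convUnit]
    _ = ∑ i ∈ r.index, (Coalgebra.counit (R := k) (r.right i)) • f (r.left i) := by
        refine Finset.sum_congr rfl fun i _ => ?_
        rw [Algebra.algebraMap_eq_smul_one, mul_smul_comm, mul_one]
    _ = f (∑ i ∈ r.index, (Coalgebra.counit (R := k) (r.right i)) • (r.left i)) := by
        rw [map_sum]; simp
    _ = f a := congrArg f hsum

lemma conv_unit_left (g : H →ₗ[k] B) : conv (convUnit (k := k)) g = g := by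
  apply LinearMap.ext; intro a
  obtain r := Coalgebra.Repr.arbitrary k a
  have hsum : ∑ i ∈ r.index, (Coalgebra.counit (R := k) (r.left i)) • (r.right i) = a := by
    have h2 := Coalgebra.sum_counit_tmul_eq (R := k) r
    have h3 := congrArg (TensorProduct.lid k H) h2
    rw [map_sum] at h3
    simp only [TensorProduct.lid_tmul, one_smul] at h3
    exact h3
  calc conv (convUnit (k := k)) g a
      = LinearMap.mul' k B (TensorProduct.map (convUnit (k := k)) g
          (∑ i ∈ r.index, r.left i ⊗ₜ[k] r.right i)) := by rw [conv_apply, r.eq]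
    _ = ∑ i ∈ r.index, algebraMap k B (Coalgebra.counit (R := k) (r.left i)) * g (r.right i) := by
        simp [map_sum, convUnit]
    _ = ∑ i ∈ r.index, (Coalgebra.counit (R := k) (r.left i)) • g (r.right i) := by
        refine Finset.sum_congr rfl fun i _ => ?_
        rw [Algebra.algebraMap_eq_smul_one, smul_mul_assoc, one_mul]
    _ = g (∑ i ∈ r.index, (Coalgebra.counit (R := k) (r.left i)) • (r.right i)) := by
        rw [map_sum]; simp
    _ = g a := congrArg g hsum

lemma conv_assoc (f g e : H →ₗ[k] B) : conv (conv f g) e = conv f (conv g e) := by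
  apply LinearMap.ext; intro a
  have hm1 : TensorProduct.map (conv f g) e
      = (TensorProduct.map (LinearMap.mul' k B ∘ₗ TensorProduct.map f g) e)
        ∘ₗ (Coalgebra.comul (R := k)).rTensor H := by
    apply TensorProduct.ext'; intro x y
    simp [conv_apply, LinearMap.rTensor_tmul]
  have hm2 : TensorProduct.map f (conv g e)
      = (TensorProduct.map f (LinearMap.mul' k B ∘ₗ TensorProduct.map g e))
        ∘ₗ (Coalgebra.comul (R := k)).lTensor H := by
    apply TensorProduct.ext'; intro x y
    simp [conv_apply, LinearMap.lTensor_tmul]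
  have key : (LinearMap.mul' k B ∘ₗ TensorProduct.map
        (LinearMap.mul' k B ∘ₗ TensorProduct.map f g) e)
      = (LinearMap.mul' k B ∘ₗ TensorProduct.map f
          (LinearMap.mul' k B ∘ₗ TensorProduct.map g e))
        ∘ₗ (TensorProduct.assoc k H H H).toLinearMap := by
    apply TensorProduct.ext_threefold
    intro x y z
    simp [LinearMap.mul'_apply, mul_assoc]
  calc conv (conv f g) e a
      = LinearMap.mul' k B (TensorProduct.map (conv f g) e (Δ a)) := rfl
    _ = LinearMap.mul' k B ((TensorProduct.map (LinearMap.mul' k B ∘ₗ TensorProduct.map f g) e)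
          ((Coalgebra.comul (R := k)).rTensor H (Δ a))) := by rw [hm1]; rfl
    _ = LinearMap.mul' k B ((TensorProduct.map (LinearMap.mul' k B ∘ₗ TensorProduct.map f g) e)
          ((TensorProduct.assoc k H H H).symm ((Coalgebra.comul (R := k)).lTensor H (Δ a)))) := by
        rw [Coalgebra.coassoc_symm_apply]
    _ = LinearMap.mul' k B ((TensorProduct.map f (LinearMap.mul' k B ∘ₗ TensorProduct.map g e))
          ((Coalgebra.comul (R := k)).lTensor H (Δ a))) := by
        have := LinearMap.congr_fun key
          ((TensorProduct.assoc k H H H).symm ((Coalgebra.comul (R := k)).lTensor H (Δ a)))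
        simp only [LinearMap.comp_apply, LinearEquiv.coe_coe,
          LinearEquiv.apply_symm_apply] at this
        exact this
    _ = conv f (conv g e) a := by rw [conv_apply, hm2]; rfl

lemma conv_comul_comul_antipode :
    conv (Coalgebra.comul : H →ₗ[k] H ⊗[k] H) (Coalgebra.comul ∘ₗ HopfAlgebra.antipode (R := k))
      = convUnit (k := k) := by
  apply LinearMap.ext; intro a
  obtain r := Coalgebra.Repr.arbitrary k a
  calc conv (Coalgebra.comul : H →ₗ[k] H ⊗[k] H)
        (Coalgebra.comul ∘ₗ HopfAlgebra.antipode (R := k)) a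
      = LinearMap.mul' k (H ⊗[k] H) (TensorProduct.map Coalgebra.comul
          (Coalgebra.comul ∘ₗ HopfAlgebra.antipode (R := k))
          (∑ i ∈ r.index, r.left i ⊗ₜ[k] r.right i)) := by rw [conv_apply, r.eq]
    _ = ∑ i ∈ r.index, (Δ (r.left i)) * (Δ (S (r.right i))) := by
        simp [map_sum, LinearMap.mul'_apply]
    _ = ∑ i ∈ r.index, Δ (r.left i * S (r.right i)) := by
        simp [Bialgebra.comul_mul]
    _ = Δ (∑ i ∈ r.index, r.left i * S (r.right i)) := by rw [map_sum]
    _ = Δ (algebraMap k H (Coalgebra.counit a)) := by rw [HopfAlgebra.sum_mul_antipode_eq_algebraMap_counit r]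
    _ = convUnit a := by
        simp [convUnit, Algebra.algebraMap_eq_smul_one, Bialgebra.comul_one (R := k) (A := H)]

lemma conv_sigma (x : H) :
    conv ((TensorProduct.mk k H H).flip (S x) ∘ₗ HopfAlgebra.antipode (R := k))
        (Coalgebra.comul : H →ₗ[k] H ⊗[k] H)
      = (TensorProduct.mk k H H 1) ∘ₗ LinearMap.mulLeft k (S x) := by
  set σx : H →ₗ[k] H ⊗[k] H :=
    (TensorProduct.mk k H H).flip (S x) ∘ₗ HopfAlgebra.antipode (R := k) with hσ
  set μR : H ⊗[k] H →ₗ[k] H :=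
    LinearMap.mul' k H ∘ₗ (HopfAlgebra.antipode (R := k)).rTensor H with hμ
  have hs1 : TensorProduct.map σx (Coalgebra.comul (R := k))
      = (σx.rTensor (H ⊗[k] H)) ∘ₗ ((Coalgebra.comul (R := k) (A := H)).lTensor H) := by
    apply TensorProduct.ext'; intro a b
    simp
  have key2 : LinearMap.mul' k (H ⊗[k] H) ∘ₗ σx.rTensor (H ⊗[k] H)
        ∘ₗ (TensorProduct.assoc k H H H).toLinearMap
      = TensorProduct.map μR (LinearMap.mulLeft k (S x)) := by
    apply TensorProduct.ext_threefold
    intro a b c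
    simp [hσ, hμ, LinearMap.mul'_apply, Algebra.TensorProduct.tmul_mul_tmul]
  have hs2 : TensorProduct.map μR (LinearMap.mulLeft k (S x))
        ∘ₗ (Coalgebra.comul (R := k) (A := H)).rTensor H
      = TensorProduct.map (μR ∘ₗ Coalgebra.comul) (LinearMap.mulLeft k (S x)) := by
    apply TensorProduct.ext'; intro a b
    simp
  have hs5 : μR ∘ₗ (Coalgebra.comul (R := k) (A := H))
      = Algebra.linearMap k H ∘ₗ Coalgebra.counit := by
    rw [hμ, LinearMap.comp_assoc]
    exact HopfAlgebra.mul_antipode_rTensor_comul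
  apply LinearMap.ext; intro y
  calc conv σx (Coalgebra.comul : H →ₗ[k] H ⊗[k] H) y
      = LinearMap.mul' k (H ⊗[k] H) (TensorProduct.map σx Coalgebra.comul (Δ y)) := rfl
    _ = LinearMap.mul' k (H ⊗[k] H) ((σx.rTensor (H ⊗[k] H))
          ((Coalgebra.comul (R := k) (A := H)).lTensor H (Δ y))) := by rw [hs1]; rfl
    _ = LinearMap.mul' k (H ⊗[k] H) ((σx.rTensor (H ⊗[k] H))
          ((TensorProduct.assoc k H H H)
            ((Coalgebra.comul (R := k) (A := H)).rTensor H (Δ y)))) := by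
        rw [Coalgebra.coassoc_apply]
    _ = TensorProduct.map μR (LinearMap.mulLeft k (S x))
          ((Coalgebra.comul (R := k) (A := H)).rTensor H (Δ y)) := by
        exact LinearMap.congr_fun key2 _
    _ = TensorProduct.map (μR ∘ₗ Coalgebra.comul) (LinearMap.mulLeft k (S x)) (Δ y) := by
        rw [← hs2]; rfl
    _ = TensorProduct.map (Algebra.linearMap k H ∘ₗ Coalgebra.counit)
          (LinearMap.mulLeft k (S x)) (Δ y) := by rw [hs5]
    _ = TensorProduct.map (Algebra.linearMap k H) (LinearMap.mulLeft k (S x))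
          ((Coalgebra.counit (R := k) (A := H)).rTensor H (Δ y)) := by
        rw [show TensorProduct.map (Algebra.linearMap k H ∘ₗ Coalgebra.counit)
            (LinearMap.mulLeft k (S x))
          = TensorProduct.map (Algebra.linearMap k H) (LinearMap.mulLeft k (S x))
            ∘ₗ (Coalgebra.counit (R := k) (A := H)).rTensor H from by
            apply TensorProduct.ext'; intro a b; simp]; rfl
    _ = TensorProduct.map (Algebra.linearMap k H) (LinearMap.mulLeft k (S x))
          ((1 : k) ⊗ₜ[k] y) := by rw [Coalgebra.rTensor_counit_comul]
    _ = (TensorProduct.mk k H H 1) (LinearMap.mulLeft k (S x) y) := by simp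

lemma conv_antipode_flip_comul :
    conv (TensorProduct.map (HopfAlgebra.antipode (R := k)) (HopfAlgebra.antipode (R := k))
        ∘ₗ (TensorProduct.comm k H H).toLinearMap ∘ₗ Coalgebra.comul)
      (Coalgebra.comul : H →ₗ[k] H ⊗[k] H) = convUnit (k := k) := by
  set g : H →ₗ[k] H ⊗[k] H :=
    TensorProduct.map (HopfAlgebra.antipode (R := k)) (HopfAlgebra.antipode (R := k))
      ∘ₗ (TensorProduct.comm k H H).toLinearMap ∘ₗ Coalgebra.comul with hg
  set Θ : (H ⊗[k] H) ⊗[k] H →ₗ[k] H ⊗[k] H :=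
    LinearMap.mul' k (H ⊗[k] H) ∘ₗ TensorProduct.map
      (TensorProduct.map (HopfAlgebra.antipode (R := k)) (HopfAlgebra.antipode (R := k))
        ∘ₗ (TensorProduct.comm k H H).toLinearMap) Coalgebra.comul with hΘ
  have hg1 : LinearMap.mul' k (H ⊗[k] H) ∘ₗ TensorProduct.map g (Coalgebra.comul (R := k))
      = Θ ∘ₗ (Coalgebra.comul (R := k) (A := H)).rTensor H := by
    apply TensorProduct.ext'; intro a b
    simp [hg, hΘ]
  have Ecore : ∀ (x : H) (u : H ⊗[k] H),
      Θ ((TensorProduct.assoc k H H H).symm (x ⊗ₜ[k] u))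
        = LinearMap.mul' k (H ⊗[k] H) (TensorProduct.map
            ((TensorProduct.mk k H H).flip (S x) ∘ₗ HopfAlgebra.antipode (R := k))
            Coalgebra.comul u) := by
    intro x u
    induction u using TensorProduct.induction_on with
    | zero => simp
    | tmul c d => simp [hΘ, TensorProduct.assoc_symm_tmul]
    | add u v hu hv => simp [TensorProduct.tmul_add, map_add, hu, hv]
  apply LinearMap.ext; intro a
  obtain r := Coalgebra.Repr.arbitrary k a
  calc conv g (Coalgebra.comul : H →ₗ[k] H ⊗[k] H) a
      = LinearMap.mul' k (H ⊗[k] H) (TensorProduct.map g Coalgebra.comul (Δ a)) := rfl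
    _ = Θ ((Coalgebra.comul (R := k) (A := H)).rTensor H (Δ a)) := LinearMap.congr_fun hg1 _
    _ = Θ ((TensorProduct.assoc k H H H).symm
          ((Coalgebra.comul (R := k) (A := H)).lTensor H (Δ a))) := by
        rw [Coalgebra.coassoc_symm_apply]
    _ = Θ ((TensorProduct.assoc k H H H).symm
          ((Coalgebra.comul (R := k) (A := H)).lTensor H
            (∑ i ∈ r.index, r.left i ⊗ₜ[k] r.right i))) := by rw [r.eq]
    _ = ∑ i ∈ r.index, Θ ((TensorProduct.assoc k H H H).symm
          (r.left i ⊗ₜ[k] Δ (r.right i))) := by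
        rw [map_sum]; rw [map_sum]; rw [map_sum]
        exact Finset.sum_congr rfl fun i _ => by rw [LinearMap.lTensor_tmul]
    _ = ∑ i ∈ r.index, conv ((TensorProduct.mk k H H).flip (S (r.left i))
          ∘ₗ HopfAlgebra.antipode (R := k)) (Coalgebra.comul : H →ₗ[k] H ⊗[k] H)
          (r.right i) := by
        exact Finset.sum_congr rfl fun i _ => Ecore (r.left i) (Δ (r.right i))
    _ = ∑ i ∈ r.index, (1 : H) ⊗ₜ[k] (S (r.left i) * r.right i) := by
        refine Finset.sum_congr rfl fun i _ => ?_
        rw [conv_sigma]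
        simp
    _ = (1 : H) ⊗ₜ[k] (∑ i ∈ r.index, S (r.left i) * r.right i) := by
        rw [TensorProduct.tmul_sum]
    _ = (1 : H) ⊗ₜ[k] (algebraMap k H (Coalgebra.counit a)) := by
        rw [HopfAlgebra.sum_antipode_mul_eq_algebraMap_counit r]
    _ = convUnit a := by
        simp only [convUnit, LinearMap.comp_apply, Algebra.linearMap_apply]
        exact (Algebra.TensorProduct.algebraMap_apply' _).symm

/-- Anticomultiplicativity of the antipode. -/
lemma comul_antipode :
    (Coalgebra.comul (R := k)) ∘ₗ HopfAlgebra.antipode (R := k)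
      = TensorProduct.map (HopfAlgebra.antipode (R := k)) (HopfAlgebra.antipode (R := k))
        ∘ₗ (TensorProduct.comm k H H).toLinearMap ∘ₗ Coalgebra.comul := by
  calc (Coalgebra.comul (R := k)) ∘ₗ HopfAlgebra.antipode (R := k)
      = conv (convUnit (k := k))
          ((Coalgebra.comul (R := k)) ∘ₗ HopfAlgebra.antipode (R := k)) :=
        (conv_unit_left _).symm
    _ = conv (conv (TensorProduct.map (HopfAlgebra.antipode (R := k))
            (HopfAlgebra.antipode (R := k))
            ∘ₗ (TensorProduct.comm k H H).toLinearMap ∘ₗ Coalgebra.comul)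
          (Coalgebra.comul : H →ₗ[k] H ⊗[k] H))
          ((Coalgebra.comul (R := k)) ∘ₗ HopfAlgebra.antipode (R := k)) := by
        rw [conv_antipode_flip_comul]
    _ = conv (TensorProduct.map (HopfAlgebra.antipode (R := k)) (HopfAlgebra.antipode (R := k))
            ∘ₗ (TensorProduct.comm k H H).toLinearMap ∘ₗ Coalgebra.comul)
          (conv (Coalgebra.comul : H →ₗ[k] H ⊗[k] H)
            ((Coalgebra.comul (R := k)) ∘ₗ HopfAlgebra.antipode (R := k))) :=
        conv_assoc _ _ _
    _ = conv (TensorProduct.map (HopfAlgebra.antipode (R := k)) (HopfAlgebra.antipode (R := k))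
            ∘ₗ (TensorProduct.comm k H H).toLinearMap ∘ₗ Coalgebra.comul)
          (convUnit (k := k)) := by rw [conv_comul_comul_antipode]
    _ = _ := conv_unit_right _

lemma comul_antipode_apply (h : H) :
    Coalgebra.comul (R := k) (HopfAlgebra.antipode (R := k) h)
      = TensorProduct.map (HopfAlgebra.antipode (R := k)) (HopfAlgebra.antipode (R := k))
          ((TensorProduct.comm k H H) (Coalgebra.comul h)) :=
  LinearMap.congr_fun (comul_antipode (k := k) (H := H)) h

end FTHM15

/-- Fundamental Theorem of Hopf modules. -/
theorem fundamental_theorem_hopf_modules (k H W : Type*) [CommRing k] [Ring H]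
    [HopfAlgebra k H] [AddCommGroup W] [Module k W]
    -- a right H-module structure on W:
    (act : W →ₗ[k] H →ₗ[k] W)
    (act_one : ∀ w : W, act w 1 = w)
    (act_mul : ∀ (w : W) (g h : H), act w (g * h) = act (act w g) h)
    -- a coassociative counital right H-coaction ρ(w) = Σ w₀ ⊗ w₁:
    (ρ : W →ₗ[k] W ⊗[k] H)
    (ρ_coassoc : ∀ w : W, (TensorProduct.assoc k W H H)
        ((TensorProduct.map ρ LinearMap.id) (ρ w))
      = (TensorProduct.map LinearMap.id (Coalgebra.comul (R := k))) (ρ w))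
    (ρ_counit : ∀ w : W, (TensorProduct.rid k W)
        ((TensorProduct.map LinearMap.id (Coalgebra.counit (R := k))) (ρ w)) = w)
    -- Hopf module compatibility ρ(w · h) = Σ w₀ · h₍₁₎ ⊗ w₁ h₍₂₎:
    (compat : ∀ (w : W) (h : H),
      ρ (act w h)
        = TensorProduct.map₂ act (LinearMap.mul k H) (ρ w) (Coalgebra.comul (R := k) h)) :
    -- (a) Σ w₀ · S(w₁) is a coinvariant:
    (∀ w : W, ρ (actAntipode k H W act (ρ w))
      = (actAntipode k H W act (ρ w)) ⊗ₜ[k] (1 : H)) ∧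
    -- (b) α and β are mutually inverse k-module isomorphisms:
    (∃ β : W →ₗ[k] (↥(coinvariants k H W ρ)) ⊗[k] H,
      (∀ w : W, (TensorProduct.map (coinvariants k H W ρ).subtype LinearMap.id) (β w)
        = GammaMap k H W act ρ w) ∧
      (∀ x : (↥(coinvariants k H W ρ)) ⊗[k] H, β (alphaMap k H W act ρ x) = x) ∧
      (∀ w : W, alphaMap k H W act ρ (β w) = w)) := by
  have hA : ∀ (w' : W) (h' : H),
      actAntipode k H W act (w' ⊗ₜ[k] h') = act w' (HopfAlgebra.antipode (R := k) h') := by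
    intro w' h'; simp [actAntipode]
  have hcoassoc' : ∀ w : W, (TensorProduct.map ρ LinearMap.id) (ρ w)
      = (TensorProduct.assoc k W H H).symm
          ((TensorProduct.map LinearMap.id (Coalgebra.comul (R := k))) (ρ w)) := by
    intro w
    rw [← ρ_coassoc w, LinearEquiv.symm_apply_apply]
  have T1 : ∀ x : W ⊗[k] H, ρ (actAntipode k H W act x)
      = (TensorProduct.lift (TensorProduct.map₂ act (LinearMap.mul k H)))
          (TensorProduct.map ρ
            (Coalgebra.comul ∘ₗ HopfAlgebra.antipode (R := k)) x) := by
    intro x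
    induction x using TensorProduct.induction_on with
    | zero => simp
    | tmul w h => rw [hA, compat]; simp
    | add u v hu hv => simp only [map_add, hu, hv]
  -- part (a)
  have parta : ∀ w : W, ρ (actAntipode k H W act (ρ w))
      = (actAntipode k H W act (ρ w)) ⊗ₜ[k] (1 : H) := by
    intro w
    have step1 : TensorProduct.map ρ (Coalgebra.comul ∘ₗ HopfAlgebra.antipode (R := k))
        = TensorProduct.map (LinearMap.id : W ⊗[k] H →ₗ[k] W ⊗[k] H)
            (Coalgebra.comul ∘ₗ HopfAlgebra.antipode (R := k))
          ∘ₗ TensorProduct.map ρ (LinearMap.id : H →ₗ[k] H) := by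
      apply TensorProduct.ext'; intro a b; simp
    have keyA : (TensorProduct.lift (TensorProduct.map₂ act (LinearMap.mul k H)))
          ∘ₗ TensorProduct.map (LinearMap.id : W ⊗[k] H →ₗ[k] W ⊗[k] H)
              (Coalgebra.comul ∘ₗ HopfAlgebra.antipode (R := k))
          ∘ₗ ((TensorProduct.assoc k W H H).symm.toLinearMap)
          ∘ₗ TensorProduct.map (LinearMap.id : W →ₗ[k] W) (Coalgebra.comul (R := k))
        = ((TensorProduct.mk k W H).flip 1) ∘ₗ actAntipode k H W act := by
      apply TensorProduct.ext'; intro w' h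
      have sub2 : ∀ u : H ⊗[k] H,
          (TensorProduct.lift (TensorProduct.map₂ act (LinearMap.mul k H)))
            ((TensorProduct.map (LinearMap.id : W ⊗[k] H →ₗ[k] W ⊗[k] H)
                (Coalgebra.comul ∘ₗ HopfAlgebra.antipode (R := k)))
              ((TensorProduct.assoc k W H H).symm (w' ⊗ₜ[k] u)))
          = (TensorProduct.lift (TensorProduct.map₂ act (LinearMap.mul k H)))
              ((TensorProduct.map (TensorProduct.mk k W H w')
                (Coalgebra.comul ∘ₗ HopfAlgebra.antipode (R := k))) u) := by
        intro u
        induction u using TensorProduct.induction_on with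
        | zero => simp
        | tmul c d => simp [TensorProduct.assoc_symm_tmul]
        | add u v hu hv => simp only [TensorProduct.tmul_add, map_add, hu, hv]
      have T3 : (TensorProduct.lift (TensorProduct.map₂ act (LinearMap.mul k H)))
          ((TensorProduct.map (TensorProduct.mk k W H w')
            (Coalgebra.comul ∘ₗ HopfAlgebra.antipode (R := k)))
              (Coalgebra.comul (R := k) h))
          = (act w' (HopfAlgebra.antipode (R := k) h)) ⊗ₜ[k] (1 : H) := by
        set μL : H ⊗[k] H →ₗ[k] H :=
          LinearMap.mul' k H ∘ₗ (HopfAlgebra.antipode (R := k)).lTensor H with hμL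
        have e1 : TensorProduct.map (TensorProduct.mk k W H w')
            (Coalgebra.comul ∘ₗ HopfAlgebra.antipode (R := k))
          = (TensorProduct.map (LinearMap.id : W ⊗[k] H →ₗ[k] W ⊗[k] H)
              (TensorProduct.map (HopfAlgebra.antipode (R := k))
                  (HopfAlgebra.antipode (R := k))
                ∘ₗ (TensorProduct.comm k H H).toLinearMap))
            ∘ₗ ((TensorProduct.mk k W H w').rTensor (H ⊗[k] H))
            ∘ₗ ((Coalgebra.comul (R := k) (A := H)).lTensor H) := by
          apply TensorProduct.ext'; intro a b
          simp [FTHM15.comul_antipode_apply (k := k)]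
        have e2 : (TensorProduct.lift (TensorProduct.map₂ act (LinearMap.mul k H)))
              ∘ₗ (TensorProduct.map (LinearMap.id : W ⊗[k] H →ₗ[k] W ⊗[k] H)
                  (TensorProduct.map (HopfAlgebra.antipode (R := k))
                      (HopfAlgebra.antipode (R := k))
                    ∘ₗ (TensorProduct.comm k H H).toLinearMap))
              ∘ₗ ((TensorProduct.mk k W H w').rTensor (H ⊗[k] H))
              ∘ₗ (TensorProduct.assoc k H H H).toLinearMap
            = (TensorProduct.map (act w') LinearMap.id)
              ∘ₗ (TensorProduct.comm k H H).toLinearMap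
              ∘ₗ TensorProduct.map μL (HopfAlgebra.antipode (R := k)) := by
          apply TensorProduct.ext_threefold
          intro a b c
          simp [hμL, LinearMap.mul'_apply]
        have e3 : TensorProduct.map μL (HopfAlgebra.antipode (R := k))
              ∘ₗ (Coalgebra.comul (R := k) (A := H)).rTensor H
            = TensorProduct.map (μL ∘ₗ Coalgebra.comul) (HopfAlgebra.antipode (R := k)) := by
          apply TensorProduct.ext'; intro a b; simp
        have e4 : μL ∘ₗ (Coalgebra.comul (R := k) (A := H))
            = Algebra.linearMap k H ∘ₗ Coalgebra.counit := by
          rw [hμL, LinearMap.comp_assoc]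
          exact HopfAlgebra.mul_antipode_lTensor_comul
        have e5 : TensorProduct.map (Algebra.linearMap k H ∘ₗ Coalgebra.counit)
              (HopfAlgebra.antipode (R := k))
            = TensorProduct.map (Algebra.linearMap k H) (HopfAlgebra.antipode (R := k))
              ∘ₗ (Coalgebra.counit (R := k) (A := H)).rTensor H := by
          apply TensorProduct.ext'; intro a b; simp
        rw [e1]
        simp only [LinearMap.comp_apply]
        rw [← Coalgebra.coassoc_apply]
        have s2 := LinearMap.congr_fun e2
          (((Coalgebra.comul (R := k) (A := H)).rTensor H) (Coalgebra.comul (R := k) h))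
        simp only [LinearMap.comp_apply, LinearEquiv.coe_coe] at s2
        rw [s2]
        have s3 := LinearMap.congr_fun e3 (Coalgebra.comul (R := k) h)
        simp only [LinearMap.comp_apply] at s3
        rw [s3, e4, e5]
        have s5 : ((Coalgebra.counit (R := k) (A := H)).rTensor H)
            (Coalgebra.comul (R := k) h) = (1 : k) ⊗ₜ[k] h :=
          Coalgebra.rTensor_counit_comul h
        simp only [LinearMap.comp_apply, s5]
        simp
      simp only [LinearMap.comp_apply, LinearEquiv.coe_coe, TensorProduct.map_tmul,
        LinearMap.id_coe, id_eq]
      rw [sub2 (Coalgebra.comul (R := k) h), T3, hA]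
      rfl
    have s1 := T1 (ρ w)
    rw [step1] at s1
    simp only [LinearMap.comp_apply] at s1
    rw [hcoassoc' w] at s1
    have s6 := LinearMap.congr_fun keyA (ρ w)
    simp only [LinearMap.comp_apply, LinearEquiv.coe_coe] at s6
    rw [s1, s6]
    rfl
  refine ⟨parta, ?_⟩
  -- part (b)
  have amem : ∀ w : W, actAntipode k H W act (ρ w) ∈ coinvariants k H W ρ := by
    intro w
    simp only [coinvariants, LinearMap.mem_ker, LinearMap.sub_apply, sub_eq_zero]
    exact parta w
  set Pbar : W →ₗ[k] ↥(coinvariants k H W ρ) :=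
    LinearMap.codRestrict (coinvariants k H W ρ)
      (actAntipode k H W act ∘ₗ ρ) (fun w => amem w) with hPbar
  have hPbar_coe : ∀ w : W, ((Pbar w : ↥(coinvariants k H W ρ)) : W)
      = actAntipode k H W act (ρ w) := fun w => rfl
  refine ⟨TensorProduct.map Pbar (LinearMap.id : H →ₗ[k] H) ∘ₗ ρ, ?_, ?_, ?_⟩
  · -- β has the right formula
    intro w
    have h1 : TensorProduct.map (coinvariants k H W ρ).subtype (LinearMap.id : H →ₗ[k] H)
          ∘ₗ TensorProduct.map Pbar (LinearMap.id : H →ₗ[k] H)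
        = TensorProduct.map (actAntipode k H W act) (LinearMap.id : H →ₗ[k] H)
          ∘ₗ TensorProduct.map ρ (LinearMap.id : H →ₗ[k] H) := by
      apply TensorProduct.ext'; intro a b
      simp [hPbar_coe]
    have h2 := LinearMap.congr_fun h1 (ρ w)
    simp only [LinearMap.comp_apply] at h2
    calc (TensorProduct.map (coinvariants k H W ρ).subtype LinearMap.id)
          ((TensorProduct.map Pbar LinearMap.id ∘ₗ ρ) w)
        = (TensorProduct.map (coinvariants k H W ρ).subtype LinearMap.id)
          ((TensorProduct.map Pbar LinearMap.id) (ρ w)) := rfl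
      _ = (TensorProduct.map (actAntipode k H W act) LinearMap.id)
            ((TensorProduct.map ρ LinearMap.id) (ρ w)) := h2
      _ = GammaMap k H W act ρ w := rfl
  · -- β ∘ α = id
    intro x
    induction x using TensorProduct.induction_on with
    | zero => simp
    | tmul v h =>
      have hv : ρ (v : W) = (v : W) ⊗ₜ[k] (1 : H) := by
        have hv0 := v.2
        simp only [coinvariants, LinearMap.mem_ker, LinearMap.sub_apply, sub_eq_zero] at hv0
        exact hv0
      have halpha : alphaMap k H W act ρ (v ⊗ₜ[k] h) = act (v : W) h := by
        simp [alphaMap]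
      have hone : (LinearMap.mul k H) 1 = LinearMap.id := by
        apply LinearMap.ext; intro d
        simp
      have hact : ∀ g : H, ρ (act (v : W) g)
          = (TensorProduct.map (act (v : W)) LinearMap.id) (Coalgebra.comul (R := k) g) := by
        intro g
        rw [compat, hv, TensorProduct.map₂_apply_tmul, hone]
      have hC1 : Pbar ∘ₗ act (v : W)
          = LinearMap.toSpanSingleton k (↥(coinvariants k H W ρ)) v
            ∘ₗ Coalgebra.counit (R := k) := by
        apply LinearMap.ext; intro g
        apply Subtype.ext
        have hAmap : actAntipode k H W act
              ∘ₗ TensorProduct.map (act (v : W)) (LinearMap.id : H →ₗ[k] H)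
            = act (v : W)
              ∘ₗ (LinearMap.mul' k H ∘ₗ (HopfAlgebra.antipode (R := k)).lTensor H) := by
          apply TensorProduct.ext'; intro c d
          simp [hA, LinearMap.mul'_apply, ← act_mul]
        have hh := LinearMap.congr_fun hAmap (Coalgebra.comul (R := k) g)
        simp only [LinearMap.comp_apply] at hh
        calc ((Pbar ∘ₗ act (v : W)) g : W)
            = actAntipode k H W act (ρ (act (v : W) g)) := rfl
          _ = actAntipode k H W act
                ((TensorProduct.map (act (v : W)) LinearMap.id)
                  (Coalgebra.comul (R := k) g)) := by rw [hact g]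
          _ = act (v : W) (LinearMap.mul' k H
                ((HopfAlgebra.antipode (R := k)).lTensor H
                  (Coalgebra.comul (R := k) g))) := hh
          _ = act (v : W) (algebraMap k H (Coalgebra.counit (R := k) g)) := by
              rw [HopfAlgebra.mul_antipode_lTensor_comul_apply]
          _ = Coalgebra.counit (R := k) g • (v : W) := by
              rw [Algebra.algebraMap_eq_smul_one, map_smul, act_one]
          _ = ((LinearMap.toSpanSingleton k (↥(coinvariants k H W ρ)) v
                ∘ₗ Coalgebra.counit (R := k)) g : W) := by
              simp [LinearMap.toSpanSingleton_apply]
      have hfin : TensorProduct.map (Pbar ∘ₗ act (v : W)) LinearMap.id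
            (Coalgebra.comul (R := k) h) = v ⊗ₜ[k] h := by
        rw [hC1]
        have e6 : TensorProduct.map
              (LinearMap.toSpanSingleton k (↥(coinvariants k H W ρ)) v
                ∘ₗ Coalgebra.counit (R := k)) (LinearMap.id (M := H))
            = TensorProduct.map
                (LinearMap.toSpanSingleton k (↥(coinvariants k H W ρ)) v)
                (LinearMap.id : H →ₗ[k] H)
              ∘ₗ (Coalgebra.counit (R := k) (A := H)).rTensor H := by
          apply TensorProduct.ext'; intro a b; simp
        rw [e6]
        simp only [LinearMap.comp_apply, Coalgebra.rTensor_counit_comul]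
        simp [LinearMap.toSpanSingleton_apply]
      have hsplit : TensorProduct.map (Pbar ∘ₗ act (v : W)) (LinearMap.id : H →ₗ[k] H)
          = TensorProduct.map Pbar (LinearMap.id : H →ₗ[k] H)
            ∘ₗ TensorProduct.map (act (v : W)) (LinearMap.id : H →ₗ[k] H) := by
        apply TensorProduct.ext'; intro a b; simp
      have hsplit' := LinearMap.congr_fun hsplit (Coalgebra.comul (R := k) h)
      simp only [LinearMap.comp_apply] at hsplit'
      calc (TensorProduct.map Pbar LinearMap.id ∘ₗ ρ) (alphaMap k H W act ρ (v ⊗ₜ[k] h))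
          = (TensorProduct.map Pbar LinearMap.id) (ρ (act (v : W) h)) := by rw [halpha]; rfl
        _ = (TensorProduct.map Pbar LinearMap.id)
              ((TensorProduct.map (act (v : W)) LinearMap.id)
                (Coalgebra.comul (R := k) h)) := by rw [hact h]
        _ = TensorProduct.map (Pbar ∘ₗ act (v : W)) LinearMap.id
              (Coalgebra.comul (R := k) h) := hsplit'.symm
        _ = v ⊗ₜ[k] h := hfin
    | add u u' hu hu' => simp only [map_add, hu, hu']
  · -- α ∘ β = id
    intro w
    have hb3a : TensorProduct.lift (act ∘ₗ (coinvariants k H W ρ).subtype)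
          ∘ₗ TensorProduct.map Pbar (LinearMap.id : H →ₗ[k] H)
        = TensorProduct.lift act
          ∘ₗ TensorProduct.map (actAntipode k H W act) (LinearMap.id : H →ₗ[k] H)
          ∘ₗ TensorProduct.map ρ (LinearMap.id : H →ₗ[k] H) := by
      apply TensorProduct.ext'; intro a b
      simp [hPbar_coe]
    have keyB : TensorProduct.lift act
          ∘ₗ TensorProduct.map (actAntipode k H W act) (LinearMap.id : H →ₗ[k] H)
          ∘ₗ ((TensorProduct.assoc k W H H).symm.toLinearMap)
          ∘ₗ TensorProduct.map (LinearMap.id : W →ₗ[k] W) (Coalgebra.comul (R := k))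
        = (TensorProduct.rid k W).toLinearMap
          ∘ₗ TensorProduct.map (LinearMap.id : W →ₗ[k] W) (Coalgebra.counit (R := k)) := by
      apply TensorProduct.ext'; intro w' h
      have sub3 : ∀ u : H ⊗[k] H,
          TensorProduct.lift act
            ((TensorProduct.map (actAntipode k H W act) LinearMap.id)
              ((TensorProduct.assoc k W H H).symm (w' ⊗ₜ[k] u)))
          = act w' (LinearMap.mul' k H
              ((HopfAlgebra.antipode (R := k)).rTensor H u)) := by
        intro u
        induction u using TensorProduct.induction_on with
        | zero => simp
        | tmul c d =>
          simp [TensorProduct.assoc_symm_tmul, hA, LinearMap.mul'_apply, ← act_mul]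
        | add u v hu hv => simp only [TensorProduct.tmul_add, map_add, hu, hv]
      simp only [LinearMap.comp_apply, LinearEquiv.coe_coe, TensorProduct.map_tmul,
        LinearMap.id_coe, id_eq]
      rw [sub3 (Coalgebra.comul (R := k) h),
        HopfAlgebra.mul_antipode_rTensor_comul_apply]
      rw [Algebra.algebraMap_eq_smul_one, map_smul, act_one]
      simp [TensorProduct.rid_tmul]
    have hb := LinearMap.congr_fun hb3a (ρ w)
    simp only [LinearMap.comp_apply] at hb
    have hkb := LinearMap.congr_fun keyB (ρ w)
    simp only [LinearMap.comp_apply, LinearEquiv.coe_coe] at hkb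
    calc alphaMap k H W act ρ ((TensorProduct.map Pbar LinearMap.id ∘ₗ ρ) w)
        = (TensorProduct.lift (act ∘ₗ (coinvariants k H W ρ).subtype))
            ((TensorProduct.map Pbar LinearMap.id) (ρ w)) := rfl
      _ = (TensorProduct.lift act)
            ((TensorProduct.map (actAntipode k H W act) LinearMap.id)
              ((TensorProduct.map ρ LinearMap.id) (ρ w))) := hb
      _ = (TensorProduct.lift act)
            ((TensorProduct.map (actAntipode k H W act) LinearMap.id)
              ((TensorProduct.assoc k W H H).symm
                ((TensorProduct.map LinearMap.id (Coalgebra.comul (R := k)))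
                  (ρ w)))) := by rw [hcoassoc' w]
      _ = (TensorProduct.rid k W)
            ((TensorProduct.map LinearMap.id (Coalgebra.counit (R := k))) (ρ w)) := hkb
      _ = w := ρ_counit w
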